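/- arXiv:0706.1617 — 2 statements merged into one kernel-verified Lean document; each statement's English description precedes it below -/
import Mathlib

section
/- For every finite strategic game H, MLS^ω ⊆ LS^ω: the outcome of iterated elimination of strategies strictly dominated by a mixed strategy is contained in the outcome of iterated elimination of strategies strictly dominated by a pure strategy. -/
open Function

/-- The opponents' part of the joint strategy `t` lies in the restriction `G`. -/
def OppIn {ι : Type*} [DecidableEq ι] {σ : ι → Type*} (G : ∀ i, Set (σ i)) (i : ι) (t : ∀ j, σ j) : Prop :=
  ∀ j, j ≠ i → t j ∈ G j

/-- `s'` strictly dominates `s` on the restriction `G` (pure strategies). -/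
def SDom {ι : Type*} [DecidableEq ι] {σ : ι → Type*} (p : ι → (∀ j, σ j) → ℝ) (G : ∀ i, Set (σ i))
    (i : ι) (s' s : σ i) : Prop :=
  ∀ t : ∀ j, σ j, OppIn G i t → p i (update t i s) < p i (update t i s')

/-- `s'` weakly dominates `s` on the restriction `G` (pure strategies). -/
def WDom {ι : Type*} [DecidableEq ι] {σ : ι → Type*} (p : ι → (∀ j, σ j) → ℝ) (G : ∀ i, Set (σ i))
    (i : ι) (s' s : σ i) : Prop :=
  (∀ t : ∀ j, σ j, OppIn G i t → p i (update t i s) ≤ p i (update t i s')) ∧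
  (∃ t : ∀ j, σ j, OppIn G i t ∧ p i (update t i s) < p i (update t i s'))

/-- Probability distributions over a finite type with support contained in `A`. -/
def Mixed {α : Type*} [Fintype α] (A : Set α) : Set (α → ℝ) :=
  {m | (∀ a, 0 ≤ m a) ∧ ∑ a, m a = 1 ∧ ∀ a, m a ≠ 0 → a ∈ A}

/-- Expected payoff of player `i` using mixed strategy `m` against `t₋ᵢ`. -/
def epay {ι : Type*} [DecidableEq ι] {σ : ι → Type*} [∀ i, Fintype (σ i)]
    (p : ι → (∀ j, σ j) → ℝ) (i : ι) (m : σ i → ℝ) (t : ∀ j, σ j) : ℝ :=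
  ∑ a, m a * p i (update t i a)

/-- The mixed strategy `m` strictly dominates `s` on `G`. -/
def MSDom {ι : Type*} [DecidableEq ι] {σ : ι → Type*} [∀ i, Fintype (σ i)]
    (p : ι → (∀ j, σ j) → ℝ) (G : ∀ i, Set (σ i)) (i : ι) (m : σ i → ℝ) (s : σ i) : Prop :=
  ∀ t : ∀ j, σ j, OppIn G i t → p i (update t i s) < epay p i m t

/-- The mixed strategy `m` weakly dominates `s` on `G`. -/
def MWDom {ι : Type*} [DecidableEq ι] {σ : ι → Type*} [∀ i, Fintype (σ i)]
    (p : ι → (∀ j, σ j) → ℝ) (G : ∀ i, Set (σ i)) (i : ι) (m : σ i → ℝ) (s : σ i) : Prop :=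
  (∀ t : ∀ j, σ j, OppIn G i t → p i (update t i s) ≤ epay p i m t) ∧
  (∃ t : ∀ j, σ j, OppIn G i t ∧ p i (update t i s) < epay p i m t)

/-- Local elimination of strategies strictly dominated by a pure strategy. -/
def LS {ι : Type*} [DecidableEq ι] {σ : ι → Type*} (p : ι → (∀ j, σ j) → ℝ)
    (G : ∀ i, Set (σ i)) : ∀ i, Set (σ i) :=
  fun i => {s | s ∈ G i ∧ ¬ ∃ s' ∈ G i, SDom p G i s' s}

/-- Global elimination of strategies strictly dominated by a pure strategy. -/
def GS {ι : Type*} [DecidableEq ι] {σ : ι → Type*} (p : ι → (∀ j, σ j) → ℝ)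
    (G : ∀ i, Set (σ i)) : ∀ i, Set (σ i) :=
  fun i => {s | s ∈ G i ∧ ¬ ∃ s' : σ i, SDom p G i s' s}

/-- Local elimination of strategies weakly dominated by a pure strategy. -/
def LW {ι : Type*} [DecidableEq ι] {σ : ι → Type*} (p : ι → (∀ j, σ j) → ℝ)
    (G : ∀ i, Set (σ i)) : ∀ i, Set (σ i) :=
  fun i => {s | s ∈ G i ∧ ¬ ∃ s' ∈ G i, WDom p G i s' s}

/-- Global elimination of strategies weakly dominated by a pure strategy. -/
def GW {ι : Type*} [DecidableEq ι] {σ : ι → Type*} (p : ι → (∀ j, σ j) → ℝ)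
    (G : ∀ i, Set (σ i)) : ∀ i, Set (σ i) :=
  fun i => {s | s ∈ G i ∧ ¬ ∃ s' : σ i, WDom p G i s' s}

/-- Local elimination of strategies strictly dominated by a mixed strategy. -/
def MLS {ι : Type*} [DecidableEq ι] {σ : ι → Type*} [∀ i, Fintype (σ i)] (p : ι → (∀ j, σ j) → ℝ)
    (G : ∀ i, Set (σ i)) : ∀ i, Set (σ i) :=
  fun i => {s | s ∈ G i ∧ ¬ ∃ m ∈ Mixed (G i), MSDom p G i m s}

/-- Global elimination of strategies strictly dominated by a mixed strategy. -/
def MGS {ι : Type*} [DecidableEq ι] {σ : ι → Type*} [∀ i, Fintype (σ i)] (p : ι → (∀ j, σ j) → ℝ)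
    (G : ∀ i, Set (σ i)) : ∀ i, Set (σ i) :=
  fun i => {s | s ∈ G i ∧ ¬ ∃ m ∈ Mixed (Set.univ : Set (σ i)), MSDom p G i m s}

/-- Local elimination of strategies weakly dominated by a mixed strategy. -/
def MLW {ι : Type*} [DecidableEq ι] {σ : ι → Type*} [∀ i, Fintype (σ i)] (p : ι → (∀ j, σ j) → ℝ)
    (G : ∀ i, Set (σ i)) : ∀ i, Set (σ i) :=
  fun i => {s | s ∈ G i ∧ ¬ ∃ m ∈ Mixed (G i), MWDom p G i m s}

/-- Global elimination of strategies weakly dominated by a mixed strategy. -/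
def MGW {ι : Type*} [DecidableEq ι] {σ : ι → Type*} [∀ i, Fintype (σ i)] (p : ι → (∀ j, σ j) → ℝ)
    (G : ∀ i, Set (σ i)) : ∀ i, Set (σ i) :=
  fun i => {s | s ∈ G i ∧ ¬ ∃ m ∈ Mixed (Set.univ : Set (σ i)), MWDom p G i m s}

/-!
Every stage `G` of MLS has the property that each strategy outside `G` is strictly dominated on
`G` by a mixed strategy over `G`. The property passes to the next stage `G'` because every mixed
strategy over `G i` is weakly beaten, against opponents in `G'`, by a mixed strategy over `G' i`:
among the mixed strategies over `G i` that weakly beat it (a compact set), take one maximizing the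
total expected payoff against opponents in `G'`; moving the weight of an eliminated strategy onto
its dominator would increase that total. Given the property, whenever LS removes `s` because of a
pure `s'`, MLS removes `s` as well: directly if `s'` survives, and through the mixed strategy
dominating `s'` otherwise.
-/

section Elimination

open Matrix

section Mixed

variable {α : Type*} [Fintype α]

lemma single_mem_Mixed [DecidableEq α] {A : Set α} {a : α} (ha : a ∈ A) :
    Pi.single a 1 ∈ Mixed A := by
  refine ⟨fun b => ?_, by simp, fun b hb => ?_⟩
  · rw [Pi.single_apply]; split_ifs <;> norm_num
  · obtain rfl : b = a := by by_contra h; simp [h] at hb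
    exact ha

lemma isCompact_Mixed (A : Set α) : IsCompact (Mixed A) := by
  have : Mixed A = stdSimplex ℝ α ∩ ⋂ a ∈ Aᶜ, {m | m a = 0} := by
    ext m
    simp only [Mixed, stdSimplex, Set.mem_inter_iff, Set.mem_iInter, Set.mem_ofPred_eq,
      Set.mem_compl_iff, and_assoc]
    exact and_congr_right' <| and_congr_right' <| forall_congr' fun a => not_imp_comm
  rw [this]
  exact (isCompact_stdSimplex ℝ α).inter_right <|
    isClosed_biInter fun a _ => isClosed_eq (continuous_apply a) continuous_const

lemma dotProduct_le_of_mem_Mixed {A : Set α} {m : α → ℝ} (hm : m ∈ Mixed A) {v : α → ℝ}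
    {c : ℝ} (hv : ∀ a ∈ A, v a ≤ c) : m ⬝ᵥ v ≤ c :=
  calc m ⬝ᵥ v ≤ ∑ a, m a * c := Finset.sum_le_sum fun a _ => by
        rcases eq_or_ne (m a) 0 with h | h
        · simp [h]
        · exact mul_le_mul_of_nonneg_left (hv a (hm.2.2 a h)) (hm.1 a)
    _ = c := by rw [← Finset.sum_mul, hm.2.1, one_mul]

def transfer [DecidableEq α] (m : α → ℝ) (b : α) (q : α → ℝ) : α → ℝ :=
  m + m b • (q - Pi.single b 1)

lemma transfer_dotProduct [DecidableEq α] (m : α → ℝ) (b : α) (q v : α → ℝ) :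
    transfer m b q ⬝ᵥ v = m ⬝ᵥ v + m b * (q ⬝ᵥ v - v b) := by
  simp [transfer, add_dotProduct, smul_dotProduct, sub_dotProduct, single_dotProduct]

lemma transfer_mem_Mixed [DecidableEq α] {A : Set α} {m q : α → ℝ} (hm : m ∈ Mixed A)
    (hq : q ∈ Mixed A) (b : α) : transfer m b q ∈ Mixed A := by
  obtain ⟨hm0, hm1, hmA⟩ := hm
  obtain ⟨hq0, hq1, hqA⟩ := hq
  have happly : ∀ a, transfer m b q a = if a = b then m b * q b else m a + m b * q a := by
    intro a
    simp only [transfer, Pi.add_apply, Pi.smul_apply, Pi.sub_apply, Pi.single_apply,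
      smul_eq_mul]
    split_ifs with h
    · subst h; ring
    · ring
  refine ⟨fun a => ?_, ?_, fun a ha => ?_⟩
  · rw [happly]
    split_ifs
    · exact mul_nonneg (hm0 b) (hq0 b)
    · exact add_nonneg (hm0 a) (mul_nonneg (hm0 b) (hq0 a))
  · have := transfer_dotProduct m b q 1
    simp only [dotProduct_one] at this
    simp [this, hm1, hq1]
  · rw [happly] at ha
    split_ifs at ha with h
    · exact h ▸ hqA b (right_ne_zero_of_mul ha)
    · by_cases hma : m a = 0
      · exact hqA a (right_ne_zero_of_mul (by simpa [hma] using ha))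
      · exact hmA a hma

end Mixed

variable {ι : Type*} [DecidableEq ι] {σ : ι → Type*} {p : ι → (∀ j, σ j) → ℝ}
  {G H : ∀ i, Set (σ i)}

lemma OppIn.mono (h : G ≤ H) {i : ι} {t : ∀ j, σ j} (ht : OppIn G i t) : OppIn H i t :=
  fun j hj => h j (ht j hj)

lemma SDom.mono (h : G ≤ H) {i : ι} {s' s : σ i} (hs : SDom p H i s' s) : SDom p G i s' s :=
  fun t ht => hs t (ht.mono h)

variable [∀ i, Fintype (σ i)]

lemma MSDom.mono (h : G ≤ H) {i : ι} {m : σ i → ℝ} {s : σ i} (hs : MSDom p H i m s) :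
    MSDom p G i m s :=
  fun t ht => hs t (ht.mono h)

lemma epay_eq_dotProduct (i : ι) (m : σ i → ℝ) (t : ∀ j, σ j) :
    epay p i m t = m ⬝ᵥ fun a => p i (update t i a) :=
  rfl

lemma epay_single (i : ι) [DecidableEq (σ i)] (a : σ i) (t : ∀ j, σ j) :
    epay p i (Pi.single a 1) t = p i (update t i a) := by
  rw [epay_eq_dotProduct, single_dotProduct, one_mul]

lemma MSDom.of_SDom {i : ι} [DecidableEq (σ i)] {s' s : σ i}
    (h : SDom p G i s' s) : MSDom p G i (Pi.single s' 1) s :=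
  fun t ht => (epay_single i s' t).symm ▸ h t ht

lemma continuous_epay (i : ι) (t : ∀ j, σ j) :
    Continuous fun m : σ i → ℝ => epay p i m t := by
  unfold epay; fun_prop

lemma exists_epay_lt_of_MSDom {i : ι} {A : Set (σ i)} {m q : σ i → ℝ} (hm : m ∈ Mixed A)
    (hq : q ∈ Mixed A) {b : σ i} (hb : m b ≠ 0) (hdom : MSDom p G i q b) :
    ∃ n ∈ Mixed A, ∀ t, OppIn G i t → epay p i m t < epay p i n t := by
  classical
  refine ⟨transfer m b q, transfer_mem_Mixed hm hq b, fun t ht => ?_⟩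
  have hgain : 0 < m b * (epay p i q t - p i (update t i b)) :=
    mul_pos ((hm.1 b).lt_of_ne' hb) (sub_pos.2 (hdom t ht))
  rw [epay_eq_dotProduct, epay_eq_dotProduct, transfer_dotProduct]
  exact lt_add_of_pos_right _ hgain

lemma exists_mixed_epay_le [Fintype ι] (hG : ∀ j, (G j).Nonempty) {i : ι} {A : Set (σ i)}
    (hdom : ∀ b ∈ A, b ∉ G i → ∃ q ∈ Mixed A, MSDom p G i q b)
    {m₀ : σ i → ℝ} (hm₀ : m₀ ∈ Mixed A) :
    ∃ m ∈ Mixed (G i), ∀ t, OppIn G i t → epay p i m₀ t ≤ epay p i m t := by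
  classical
  set T := Finset.univ.filter (OppIn G i)
  have hmemT : ∀ t, t ∈ T ↔ OppIn G i t := fun t => by simp [T]
  have hT : T.Nonempty := ⟨fun j => (hG j).some, (hmemT _).2 fun j _ => (hG j).some_mem⟩
  set D := Mixed A ∩ ⋂ t ∈ T, {m | epay p i m₀ t ≤ epay p i m t}
  have hD : IsCompact D := (isCompact_Mixed A).inter_right <|
    isClosed_biInter fun t _ => isClosed_le continuous_const (continuous_epay i t)
  have hm₀D : m₀ ∈ D := ⟨hm₀, Set.mem_iInter₂.2 fun t _ => le_refl (epay p i m₀ t)⟩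
  obtain ⟨m, ⟨hmA, hm₀m⟩, hmax⟩ := hD.exists_isMaxOn ⟨m₀, hm₀D⟩
    (continuous_finsetSum T fun t _ => continuous_epay i t).continuousOn
  replace hm₀m : ∀ t ∈ T, epay p i m₀ t ≤ epay p i m t := Set.mem_iInter₂.1 hm₀m
  have hsupp : ∀ b, m b ≠ 0 → b ∈ G i := by
    intro b hb
    by_contra hbG
    obtain ⟨q, hqA, hq⟩ := hdom b (hmA.2.2 b hb) hbG
    obtain ⟨n, hnA, hn⟩ := exists_epay_lt_of_MSDom hmA hqA hb hq
    have hnD : n ∈ D :=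
      ⟨hnA, Set.mem_iInter₂.2 fun t ht => (hm₀m t ht).trans (hn t ((hmemT t).1 ht)).le⟩
    exact (hmax hnD).not_gt <|
      Finset.sum_lt_sum_of_nonempty hT fun t ht => hn t ((hmemT t).1 ht)
  exact ⟨m, ⟨hmA.1, hmA.2.1, hsupp⟩, fun t ht => hm₀m t ((hmemT t).2 ht)⟩

lemma MLS_le : MLS p G ≤ G :=
  fun _ _ hs => hs.1

lemma exists_MSDom_of_notMem_MLS {i : ι} {s : σ i} (hs : s ∈ G i) (hs' : s ∉ MLS p G i) :
    ∃ m ∈ Mixed (G i), MSDom p G i m s :=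
  not_not.mp fun h => hs' ⟨hs, h⟩

lemma MLS_nonempty (hG : ∀ j, (G j).Nonempty) (j : ι) : (MLS p G j).Nonempty := by
  choose t ht using hG
  obtain ⟨s, hs, hbest⟩ := Set.exists_max_image (G j) (fun a => p j (update t j a))
    (Set.toFinite _) ⟨t j, ht j⟩
  exact ⟨s, hs, fun ⟨m, hm, hdom⟩ =>
    (hdom t fun l _ => ht l).not_ge (dotProduct_le_of_mem_Mixed hm hbest)⟩

def MixedDominatesCompl (p : ι → (∀ j, σ j) → ℝ) (G : ∀ i, Set (σ i)) : Prop :=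
  ∀ i, ∀ s ∉ G i, ∃ m ∈ Mixed (G i), MSDom p G i m s

lemma mixedDominatesCompl_MLS [Fintype ι] (hG : ∀ j, (MLS p G j).Nonempty)
    (h : MixedDominatesCompl p G) :
    MixedDominatesCompl p (MLS p G) := by
  intro i s hs
  obtain ⟨m₀, hm₀, hdom₀⟩ : ∃ m ∈ Mixed (G i), MSDom p G i m s := by
    by_cases hsG : s ∈ G i
    · exact exists_MSDom_of_notMem_MLS hsG hs
    · exact h i s hsG
  have helim : ∀ b ∈ G i, b ∉ MLS p G i → ∃ q ∈ Mixed (G i), MSDom p (MLS p G) i q b :=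
    fun b hb hb' =>
      let ⟨q, hq, hdom⟩ := exists_MSDom_of_notMem_MLS hb hb'
      ⟨q, hq, hdom.mono MLS_le⟩
  obtain ⟨m, hm, hle⟩ := exists_mixed_epay_le hG helim hm₀
  exact ⟨m, hm, fun t ht => (hdom₀ t (ht.mono MLS_le)).trans_le (hle t ht)⟩

lemma MLS_le_LS (hGH : G ≤ H) (hG : MixedDominatesCompl p G) : MLS p G ≤ LS p H := by
  classical
  rintro i s ⟨hsG, hund⟩
  refine ⟨hGH i hsG, ?_⟩
  rintro ⟨s', -, hdom⟩
  apply hund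
  have hdomG := hdom.mono hGH
  by_cases hs'G : s' ∈ G i
  · exact ⟨Pi.single s' 1, single_mem_Mixed hs'G, .of_SDom hdomG⟩
  · obtain ⟨m, hm, hms'⟩ := hG i s' hs'G
    exact ⟨m, hm, fun t ht => (hdomG t ht).trans (hms' t ht)⟩

lemma MLS_iterate_nonempty [∀ i, Nonempty (σ i)] (k : ℕ) (j : ι) :
    ((MLS p)^[k] ⊤ j).Nonempty := by
  induction k generalizing j with
  | zero => exact Set.univ_nonempty
  | succ k ih => rw [iterate_succ_apply']; exact MLS_nonempty ih j

lemma mixedDominatesCompl_MLS_iterate [Fintype ι] [∀ i, Nonempty (σ i)]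
    (k : ℕ) : MixedDominatesCompl p ((MLS p)^[k] ⊤) := by
  induction k with
  | zero => exact fun i s hs => absurd trivial hs
  | succ k ih =>
    rw [iterate_succ_apply']
    exact mixedDominatesCompl_MLS (MLS_nonempty (MLS_iterate_nonempty k)) ih

lemma MLS_iterate_le_LS_iterate [Fintype ι] [∀ i, Nonempty (σ i)] (k : ℕ) :
    (MLS p)^[k] ⊤ ≤ (LS p)^[k] ⊤ := by
  induction k with
  | zero => exact le_rfl
  | succ k ih =>
    rw [iterate_succ_apply', iterate_succ_apply']
    exact MLS_le_LS ih (mixedDominatesCompl_MLS_iterate k)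

end Elimination

theorem MLS_omega_subset_LS_omega_general {ι : Type*} [DecidableEq ι] [Fintype ι] {σ : ι → Type*}
    [∀ i, Fintype (σ i)] [∀ i, Nonempty (σ i)]
    (p : ι → (∀ j, σ j) → ℝ) :
    (⨅ k : ℕ, (MLS p)^[k] ⊤) ≤ ⨅ k : ℕ, (LS p)^[k] ⊤ :=
  iInf_mono MLS_iterate_le_LS_iterate

/-- MLS^ω ⊆ LS^ω. -/
theorem MLS_omega_subset_LS_omega {ι : Type*} [DecidableEq ι] [Fintype ι] {σ : ι → Type*}
    [∀ i, Fintype (σ i)] [∀ i, Nonempty (σ i)]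
    (hn : 1 < Fintype.card ι) (p : ι → (∀ j, σ j) → ℝ) :
    (⨅ k : ℕ, (MLS p)^[k] ⊤) ≤ ⨅ k : ℕ, (LS p)^[k] ⊤ :=
  MLS_omega_subset_LS_omega_general p
end

section
/- The operators LS and MLS are not monotonic: there exist a finite strategic game H and restrictions G ⊆ G' of H such that LS(G) ⊄ LS(G') and MLS(G) ⊄ MLS(G'). Concretely, let H be the two-player game with row strategies {A, B}, column strategy {X}, and payoffs (A,X) = (1,0), (B,X) = (0,0); then for G = ({B},{X}) and G' = H one has G ⊆ G', LS(G) = MLS(G) = ({B},{X}), and LS(H) = MLS(H) = ({A},{X}), so neither LS(G) ⊆ LS(G') nor MLS(G) ⊆ MLS(G'). -/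
open Function

/-! The concrete game from Section 3: players are `Bool` (`true` = row player,
`false` = column player), row strategies `Fin 2` (`0 = A, 1 = B`), column
strategy `Fin 1` (`0 = X`).  Payoffs: (A,X) = (1,0), (B,X) = (0,0). -/

/-- Strategy sets of the two players. -/
def Str17 : Bool → Type := fun b => cond b (Fin 2) (Fin 1)

instance (b : Bool) : Fintype (Str17 b) := by
  cases b
  · exact inferInstanceAs (Fintype (Fin 1))
  · exact inferInstanceAs (Fintype (Fin 2))

instance (b : Bool) : Nonempty (Str17 b) := by
  cases b
  · exact inferInstanceAs (Nonempty (Fin 1))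
  · exact inferInstanceAs (Nonempty (Fin 2))

/-- The payoff functions: row player gets 1 on A and 0 on B, column player gets 0. -/
def pay17 : Bool → (∀ j, Str17 j) → ℝ
  | true => fun t => ![(1 : ℝ), 0] (t true)
  | false => fun _ => 0

/-- The restriction G = ({B}, {X}). -/
def GB17 : ∀ b, Set (Str17 b)
  | true => ({1} : Set (Fin 2))
  | false => ({0} : Set (Fin 1))

/-- The restriction ({A}, {X}). -/
def GA17 : ∀ b, Set (Str17 b)
  | true => ({0} : Set (Fin 2))
  | false => ({0} : Set (Fin 1))

/-! A pure dominator is a degenerate mixed one, so `MLS G ≤ LS G`; and since a mixed strategy's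
expected payoff is an average, a best response to some opponent profile in `G` survives `MLS`,
hence also `LS`. In `G = ({B}, {X})` each player has a single strategy, trivially a best response,
so nothing is removed. In the full game `A` is a best response and strictly dominates `B`, so
exactly `({A}, {X})` survives: enlarging the game by `A` eliminates `B`. -/

section Dominance

variable {ι : Type*} [DecidableEq ι] {σ : ι → Type*}

lemma Mixed.sum_mul_le {α : Type*} [Fintype α] {A : Set α} {m : α → ℝ} (hm : m ∈ Mixed A)
    {f : α → ℝ} {c : ℝ} (hf : ∀ a ∈ A, f a ≤ c) : ∑ a, m a * f a ≤ c :=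
  calc ∑ a, m a * f a ≤ ∑ a, m a * c := by
        refine Finset.sum_le_sum fun a _ => ?_
        by_cases ha : m a = 0
        · simp [ha]
        · exact mul_le_mul_of_nonneg_left (hf a (hm.2.2 a ha)) (hm.1 a)
    _ = c := by rw [← Finset.sum_mul, hm.2.1, one_mul]

lemma pi_single_mem_Mixed {α : Type*} [Fintype α] [DecidableEq α] {A : Set α} {a : α}
    (ha : a ∈ A) : (Pi.single a 1 : α → ℝ) ∈ Mixed A := by
  refine ⟨fun b => ?_, by simp, fun b hb => ?_⟩
  · by_cases h : b = a <;> simp [h]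
  · by_cases h : b = a
    · exact h ▸ ha
    · simp [h] at hb

lemma epay_pi_single [∀ i, Fintype (σ i)] [∀ i, DecidableEq (σ i)] (p : ι → (∀ j, σ j) → ℝ)
    (i : ι) (s : σ i) (t : ∀ j, σ j) : epay p i (Pi.single s 1) t = p i (update t i s) := by
  simp [epay, Pi.single_apply]

lemma exists_oppIn {G : ∀ i, Set (σ i)} (hG : ∀ j, (G j).Nonempty) (i : ι) :
    ∃ t : ∀ j, σ j, OppIn G i t :=
  ⟨fun j => (hG j).some, fun j _ => (hG j).some_mem⟩

variable (p : ι → (∀ j, σ j) → ℝ)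

lemma LS_le (G : ∀ i, Set (σ i)) : LS p G ≤ G := fun _ _ hs => hs.1

variable [∀ i, Fintype (σ i)]

lemma MLS_le_LS_s17 (G : ∀ i, Set (σ i)) : MLS p G ≤ LS p G := by
  classical
  rintro i s ⟨hs, hnd⟩
  refine ⟨hs, fun ⟨s', hs', hdom⟩ => hnd ⟨Pi.single s' 1, pi_single_mem_Mixed hs', fun t ht => ?_⟩⟩
  rw [epay_pi_single]
  exact hdom t ht

lemma mem_MLS_of_isBestResponse {G : ∀ i, Set (σ i)} {i : ι} {s : σ i} (hs : s ∈ G i)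
    {t : ∀ j, σ j} (ht : OppIn G i t) (hbest : ∀ a ∈ G i, p i (update t i a) ≤ p i (update t i s)) :
    s ∈ MLS p G i :=
  ⟨hs, fun ⟨_, hm, hdom⟩ => (hdom t ht).not_ge (Mixed.sum_mul_le hm hbest)⟩

lemma mem_MLS_of_subsingleton {G : ∀ i, Set (σ i)} (hG : ∀ j, (G j).Nonempty) {i : ι}
    (hi : (G i).Subsingleton) {s : σ i} (hs : s ∈ G i) : s ∈ MLS p G i :=
  have ⟨_, ht⟩ := exists_oppIn hG i
  mem_MLS_of_isBestResponse p hs ht fun _ ha => hi ha hs ▸ le_rfl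

lemma LS_eq_and_MLS_eq_of_le {G S : ∀ i, Set (σ i)} (hS : S ≤ MLS p G) (hLS : LS p G ≤ S) :
    LS p G = S ∧ MLS p G = S :=
  ⟨le_antisymm hLS (hS.trans (MLS_le_LS_s17 p G)),
    le_antisymm ((MLS_le_LS_s17 p G).trans hLS) hS⟩

end Dominance

def strA : Str17 true := (0 : Fin 2)

def strB : Str17 true := (1 : Fin 2)

lemma str17_true_cases (s : Str17 true) : s = strA ∨ s = strB := by
  have h : ∀ x : Fin 2, x = 0 ∨ x = 1 := by decide
  exact h s

lemma strB_ne_strA : strB ≠ strA :=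
  Fin.zero_lt_one.ne'

lemma pay17_update_strA (t : ∀ j, Str17 j) : pay17 true (update t true strA) = 1 := by
  show ![(1 : ℝ), 0] (update t true strA true) = 1
  rw [update_self]
  rfl

lemma pay17_update_strB (t : ∀ j, Str17 j) : pay17 true (update t true strB) = 0 := by
  show ![(1 : ℝ), 0] (update t true strB true) = 0
  rw [update_self]
  rfl

lemma GB17_nonempty : ∀ b, (GB17 b).Nonempty
  | true => Set.singleton_nonempty _
  | false => Set.singleton_nonempty _

lemma GA17_le_MLS_top : GA17 ≤ MLS pay17 ⊤ := by
  have ⟨t, ht⟩ := exists_oppIn (σ := Str17) (G := ⊤) (fun _ => Set.univ_nonempty) true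
  rintro (_ | _) s hs
  · exact mem_MLS_of_subsingleton pay17 (fun _ => Set.univ_nonempty)
      (Set.subsingleton_of_subsingleton (α := Fin 1)) trivial
  · refine mem_MLS_of_isBestResponse pay17 trivial ht fun a _ => ?_
    rw [show s = strA from hs, pay17_update_strA]
    rcases str17_true_cases a with rfl | rfl
    · rw [pay17_update_strA]
    · rw [pay17_update_strB]; exact zero_le_one

lemma LS_top_le_GA17 : LS pay17 ⊤ ≤ GA17 := by
  rintro (_ | _) s ⟨-, hnd⟩
  · exact Fin.fin_one_eq_zero s
  · rcases str17_true_cases s with rfl | rfl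
    · rfl
    · refine absurd ⟨strA, trivial, fun t _ => ?_⟩ hnd
      rw [pay17_update_strA, pay17_update_strB]
      exact zero_lt_one

/-- LS and MLS are not monotonic: for the game above and G = ({B},{X}) ⊆ H one
has LS(G) = MLS(G) = G, LS(H) = MLS(H) = ({A},{X}), and neither LS(G) ⊆ LS(H)
nor MLS(G) ⊆ MLS(H). -/
theorem LS_MLS_not_monotone :
    GB17 ≤ (⊤ : ∀ b, Set (Str17 b)) ∧
    LS pay17 GB17 = GB17 ∧ MLS pay17 GB17 = GB17 ∧
    LS pay17 ⊤ = GA17 ∧ MLS pay17 ⊤ = GA17 ∧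
    ¬ LS pay17 GB17 ≤ LS pay17 ⊤ ∧ ¬ MLS pay17 GB17 ≤ MLS pay17 ⊤ := by
  have hGB : LS pay17 GB17 = GB17 ∧ MLS pay17 GB17 = GB17 :=
    LS_eq_and_MLS_eq_of_le pay17
      (fun b _ hs => mem_MLS_of_subsingleton pay17 GB17_nonempty
        (by cases b <;> exact Set.subsingleton_singleton) hs)
      (LS_le pay17 GB17)
  have hTop : LS pay17 ⊤ = GA17 ∧ MLS pay17 ⊤ = GA17 :=
    LS_eq_and_MLS_eq_of_le pay17 GA17_le_MLS_top LS_top_le_GA17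
  have hGB_not_le_GA : ¬ GB17 ≤ GA17 := fun h => strB_ne_strA (h true rfl)
  refine ⟨le_top, hGB.1, hGB.2, hTop.1, hTop.2, ?_, ?_⟩
  · rwa [hGB.1, hTop.1]
  · rwa [hGB.2, hTop.2]
end
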